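/- arXiv:2508.16391 — 4 statements merged into one kernel-verified Lean document; each statement's English description precedes it below -/
import Mathlib

section
/- Let 1 < p < 2 and N ≥ 1. For all vectors a, b ∈ ℝᴺ, ((|a|^{p−2}a − |b|^{p−2}b) · (a − b)) ≥ (p − 1)·|a − b|²·(1 + |a|² + |b|²)^{(p−2)/2}, where for a = 0 the expression |a|^{p−2}a is interpreted as 0. -/
/-!
Write `⟪a, b⟫ = ‖a‖ ‖b‖ - s` with `s ≥ 0`. Both sides then split into a radial part, which is the
one-dimensional inequality for `t ↦ t ^ (p - 1)` (the tangent line of this concave function at the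
larger of `‖a‖, ‖b‖`, together with `(1 + ‖a‖² + ‖b‖²) ^ ((p - 2) / 2) ≤ (max ‖a‖ ‖b‖) ^ (p - 2)`),
and a part proportional to `s`, whose coefficient `‖a‖ ^ (p - 2) + ‖b‖ ^ (p - 2)` dominates
`2 (p - 1) (1 + ‖a‖² + ‖b‖²) ^ ((p - 2) / 2)` for the same reason.
-/

open scoped Classical RealInnerProductSpace

namespace Real

lemma rpow_le_rpow_add_mul_rpow_sub_one_mul_sub {q x y : ℝ} (hq0 : 0 ≤ q) (hq1 : q ≤ 1)
    (hx : 0 < x) (hy : 0 ≤ y) : y ^ q ≤ x ^ q + q * x ^ (q - 1) * (y - x) := by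
  have hyx : 0 ≤ y / x := div_nonneg hy hx.le
  have hbernoulli := rpow_one_add_le_one_add_mul_self (by linarith : -1 ≤ y / x - 1) hq0 hq1
  rw [add_sub_cancel] at hbernoulli
  calc y ^ q = x ^ q * (y / x) ^ q := by rw [← mul_rpow hx.le hyx, mul_div_cancel₀ _ hx.ne']
    _ ≤ x ^ q * (1 + q * (y / x - 1)) := by gcongr
    _ = x ^ q + q * x ^ (q - 1) * (y - x) := by rw [rpow_sub_one hx.ne']; field_simp

lemma rpow_div_two_le_rpow {r x y : ℝ} (hr : r ≤ 0) (hx : 0 < x) (hxy : x ^ 2 ≤ y) :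
    y ^ (r / 2) ≤ x ^ r :=
  calc y ^ (r / 2) ≤ (x ^ 2) ^ (r / 2) := rpow_le_rpow_of_nonpos (by positivity) hxy (by linarith)
    _ = x ^ r := by
      rw [← rpow_natCast, ← rpow_mul hx.le, Nat.cast_ofNat, mul_div_cancel₀ r two_ne_zero]

end Real

lemma mul_sq_sub_mul_rpow_le_rpow_sub_rpow_mul_sub {p A B : ℝ} (hp1 : 1 ≤ p) (hp2 : p ≤ 2)
    (hA : 0 ≤ A) (hB : 0 ≤ B) :
    (p - 1) * (A - B) ^ 2 * (1 + A ^ 2 + B ^ 2) ^ ((p - 2) / 2) ≤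
      (A ^ (p - 1) - B ^ (p - 1)) * (A - B) := by
  wlog hBA : B ≤ A generalizing A B
  · convert this hB hA (le_of_not_ge hBA) using 1 <;> ring_nf
  rcases hBA.eq_or_lt with rfl | hlt
  · simp
  have hA' : 0 < A := hB.trans_lt hlt
  have htangent := Real.rpow_le_rpow_add_mul_rpow_sub_one_mul_sub (by linarith : 0 ≤ p - 1)
    (by linarith : p - 1 ≤ 1) hA' hB
  rw [show p - 1 - 1 = p - 2 by ring] at htangent
  have hweight : (1 + A ^ 2 + B ^ 2) ^ ((p - 2) / 2) ≤ A ^ (p - 2) :=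
    Real.rpow_div_two_le_rpow (by linarith) hA' (by nlinarith)
  have hslope : (p - 1) * (A - B) * (1 + A ^ 2 + B ^ 2) ^ ((p - 2) / 2) ≤
      A ^ (p - 1) - B ^ (p - 1) :=
    calc (p - 1) * (A - B) * (1 + A ^ 2 + B ^ 2) ^ ((p - 2) / 2)
        ≤ (p - 1) * (A - B) * A ^ (p - 2) := by gcongr
      _ ≤ A ^ (p - 1) - B ^ (p - 1) := by linarith
  calc (p - 1) * (A - B) ^ 2 * (1 + A ^ 2 + B ^ 2) ^ ((p - 2) / 2)
      = (p - 1) * (A - B) * (1 + A ^ 2 + B ^ 2) ^ ((p - 2) / 2) * (A - B) := by ring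
    _ ≤ (A ^ (p - 1) - B ^ (p - 1)) * (A - B) :=
      mul_le_mul_of_nonneg_right hslope (sub_nonneg.2 hBA)

section InnerProductSpace

variable {E : Type*} [NormedAddCommGroup E] [InnerProductSpace ℝ E]

lemma ite_eq_norm_rpow_smul (r : ℝ) (a : E) [Decidable (a = 0)] :
    (if a = 0 then 0 else ‖a‖ ^ r • a) = ‖a‖ ^ r • a :=
  ite_eq_right_iff.2 fun h => by simp [h]

lemma norm_sub_sq_eq_sq_sub_norm_add (a b : E) :
    ‖a - b‖ ^ 2 = (‖a‖ - ‖b‖) ^ 2 + 2 * (‖a‖ * ‖b‖ - ⟪a, b⟫) := by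
  rw [norm_sub_sq_real]; ring

lemma inner_rpow_smul_sub_rpow_smul {p : ℝ} (hp : p ≠ 1) (a b : E) :
    ⟪‖a‖ ^ (p - 2) • a - ‖b‖ ^ (p - 2) • b, a - b⟫ =
      (‖a‖ ^ (p - 1) - ‖b‖ ^ (p - 1)) * (‖a‖ - ‖b‖) +
        (‖a‖ ^ (p - 2) + ‖b‖ ^ (p - 2)) * (‖a‖ * ‖b‖ - ⟪a, b⟫) := by
  have hp' : p - 2 + 1 ≠ 0 := by contrapose! hp; linarith
  rw [show p - 1 = p - 2 + 1 by ring, Real.rpow_add_one' (norm_nonneg a) hp',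
    Real.rpow_add_one' (norm_nonneg b) hp']
  simp only [inner_sub_left, inner_sub_right, real_inner_smul_left, real_inner_self_eq_norm_sq,
    real_inner_comm a b]
  ring

lemma rpow_div_two_mul_le_norm_rpow_mul {r y : ℝ} (hr : r ≤ 0) {a : E} (b : E)
    (hy : ‖a‖ ^ 2 ≤ y) :
    y ^ (r / 2) * (‖a‖ * ‖b‖ - ⟪a, b⟫) ≤ ‖a‖ ^ r * (‖a‖ * ‖b‖ - ⟪a, b⟫) := by
  rcases eq_or_ne a 0 with rfl | ha
  · simp
  exact mul_le_mul_of_nonneg_right (Real.rpow_div_two_le_rpow hr (norm_pos_iff.2 ha) hy)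
    (sub_nonneg.2 (real_inner_le_norm a b))

end InnerProductSpace

theorem stmt6_general (p : ℝ) (hp : 1 < p) (hp2 : p < 2) (N : ℕ)
    (a b : EuclideanSpace ℝ (Fin N)) :
    (p - 1) * ‖a - b‖ ^ 2 * (1 + ‖a‖ ^ 2 + ‖b‖ ^ 2) ^ ((p - 2) / 2) ≤
      ⟪(if a = 0 then 0 else ‖a‖ ^ (p - 2) • a) -
        (if b = 0 then 0 else ‖b‖ ^ (p - 2) • b), a - b⟫ := by
  rw [ite_eq_norm_rpow_smul, ite_eq_norm_rpow_smul, inner_rpow_smul_sub_rpow_smul hp.ne' a b,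
    norm_sub_sq_eq_sq_sub_norm_add]
  have hradial := mul_sq_sub_mul_rpow_le_rpow_sub_rpow_mul_sub hp.le hp2.le
    (norm_nonneg a) (norm_nonneg b)
  have hr : p - 2 ≤ 0 := by linarith
  have ha := rpow_div_two_mul_le_norm_rpow_mul hr b
    (by nlinarith : ‖a‖ ^ 2 ≤ 1 + ‖a‖ ^ 2 + ‖b‖ ^ 2)
  have hb := rpow_div_two_mul_le_norm_rpow_mul hr a
    (by nlinarith : ‖b‖ ^ 2 ≤ 1 + ‖a‖ ^ 2 + ‖b‖ ^ 2)
  rw [mul_comm ‖b‖, real_inner_comm] at hb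
  have hs : 0 ≤ ‖a‖ * ‖b‖ - ⟪a, b⟫ := sub_nonneg.2 (real_inner_le_norm a b)
  have hweight : 0 ≤ (1 + ‖a‖ ^ 2 + ‖b‖ ^ 2) ^ ((p - 2) / 2) := by positivity
  nlinarith [mul_nonneg (mul_nonneg (by linarith : 0 ≤ 2 - p) hweight) hs]

theorem stmt6 (p : ℝ) (hp : 1 < p) (hp2 : p < 2) (N : ℕ) (hN : 1 ≤ N)
    (a b : EuclideanSpace ℝ (Fin N)) :
    (p - 1) * ‖a - b‖ ^ 2 * (1 + ‖a‖ ^ 2 + ‖b‖ ^ 2) ^ ((p - 2) / 2) ≤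
      ⟪(if a = 0 then 0 else ‖a‖ ^ (p - 2) • a) -
        (if b = 0 then 0 else ‖b‖ ^ (p - 2) • b), a - b⟫ :=
  stmt6_general p hp hp2 N a b
end

section
/- Let 1 < p < 2 and N ≥ 1. For all a, b ∈ ℝᴺ, | |a|^{p−2}a − |b|^{p−2}b | ≤ 2^{2−p}·|a − b|^{p−1}, where |a|^{p−2}a is interpreted as 0 when a = 0. -/
/-!
Write `A = ‖a‖`, `B = ‖b‖`, `u = ‖a - b‖²`. Both sides depend on `a, b` only through `A, B, u`:
the square of the left side is affine in `u`, while the square of the right side is a multiple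
of the concave function `u ^ (p - 1)`. Since `u` ranges over `[(A - B)², (A + B)²]`, it suffices
to compare at the endpoints, i.e. for `b` a nonnegative or nonpositive multiple of `a`, where
the inequality reduces to `|A^s - B^s| ≤ |A - B|^s` and `A^s + B^s ≤ 2^(1-s) (A + B)^s`
for `s = p - 1 ∈ [0, 1]`.
-/

open Real Set

namespace Real

variable {s : ℝ}

theorem abs_rpow_sub_rpow_le (hs0 : 0 ≤ s) (hs1 : s ≤ 1) {x y : ℝ} (hx : 0 ≤ x) (hy : 0 ≤ y) :
    |x ^ s - y ^ s| ≤ |x - y| ^ s := by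
  wlog hyx : y ≤ x generalizing x y
  · rw [abs_sub_comm, abs_sub_comm x]
    exact this hy hx (le_of_not_ge hyx)
  have hmono : y ^ s ≤ x ^ s := rpow_le_rpow hy hyx hs0
  have hsub : x ^ s ≤ (x - y) ^ s + y ^ s := by
    simpa using rpow_add_le_add_rpow (sub_nonneg.2 hyx) hy hs0 hs1
  rw [abs_of_nonneg (sub_nonneg.2 hmono), abs_of_nonneg (sub_nonneg.2 hyx)]
  linarith

theorem rpow_add_rpow_le_two_rpow_mul (hs0 : 0 ≤ s) (hs1 : s ≤ 1) {x y : ℝ} (hx : 0 ≤ x)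
    (hy : 0 ≤ y) : x ^ s + y ^ s ≤ 2 ^ (1 - s) * (x + y) ^ s := by
  have hmid := (concaveOn_rpow hs0 hs1).2 hx hy (by norm_num : (0 : ℝ) ≤ 1 / 2)
    (by norm_num : (0 : ℝ) ≤ 1 / 2) (by norm_num)
  simp only [smul_eq_mul] at hmid
  rw [show 1 / 2 * x + 1 / 2 * y = (x + y) / 2 by ring, div_rpow (add_nonneg hx hy) zero_le_two]
    at hmid
  rw [rpow_sub two_pos, rpow_one]
  calc x ^ s + y ^ s ≤ 2 * ((x + y) ^ s / 2 ^ s) := by linarith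
    _ = 2 / 2 ^ s * (x + y) ^ s := by ring

theorem rpow_sq_add_rpow_sq_sub_le (hs0 : 0 ≤ s) (hs1 : s ≤ 1) {A B u : ℝ} (hA : 0 < A)
    (hB : 0 < B) (hu : u ∈ Icc ((A - B) ^ 2) ((A + B) ^ 2)) :
    (A ^ s) ^ 2 + (B ^ s) ^ 2 - A ^ (s - 1) * B ^ (s - 1) * (A ^ 2 + B ^ 2 - u) ≤
      (2 ^ (1 - s)) ^ 2 * u ^ s := by
  set c := A ^ (s - 1) * B ^ (s - 1)
  have hc : c * (A * B) = A ^ s * B ^ s := by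
    simp only [c, rpow_sub_one hA.ne', rpow_sub_one hB.ne']
    field_simp
  have hc0 : 0 ≤ c := by positivity
  have hK : 1 ≤ (2 : ℝ) ^ (1 - s) := one_le_rpow one_le_two (by linarith)
  have hconc : ConcaveOn ℝ (Ici 0) fun u =>
      (2 ^ (1 - s)) ^ 2 * u ^ s - ((A ^ s) ^ 2 + (B ^ s) ^ 2 - c * (A ^ 2 + B ^ 2 - u)) := by
    have haff : ConvexOn ℝ (Ici 0) fun u =>
        c * u + ((A ^ s) ^ 2 + (B ^ s) ^ 2 - c * (A ^ 2 + B ^ 2)) :=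
      ((convexOn_id (convex_Ici 0)).smul hc0).add_const _
    refine (((concaveOn_rpow hs0 hs1).smul (sq_nonneg (2 ^ (1 - s) : ℝ))).sub haff).congr ?_
    intro u _
    simp only [Pi.sub_apply, smul_eq_mul]
    ring
  have hseg : u ∈ segment ℝ ((A - B) ^ 2) ((A + B) ^ 2) := by
    rwa [segment_eq_Icc (by nlinarith)]
  refine sub_nonneg.1 (le_trans (le_min ?_ ?_)
    (hconc.ge_on_segment (mem_Ici.2 (sq_nonneg _)) (mem_Ici.2 (sq_nonneg _)) hseg))
  · have h : (A ^ s - B ^ s) ^ 2 ≤ (2 ^ (1 - s) * |A - B| ^ s) ^ 2 := by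
      rw [← sq_abs (A ^ s - B ^ s)]
      gcongr
      calc |A ^ s - B ^ s| ≤ |A - B| ^ s := abs_rpow_sub_rpow_le hs0 hs1 hA.le hB.le
        _ ≤ 2 ^ (1 - s) * |A - B| ^ s := le_mul_of_one_le_left (by positivity) hK
    rw [← sq_abs (A - B), ← rpow_pow_comm (abs_nonneg _), sq_abs]
    linear_combination h - 2 * hc
  · have h : (A ^ s + B ^ s) ^ 2 ≤ (2 ^ (1 - s) * (A + B) ^ s) ^ 2 := by
      gcongr
      exact rpow_add_rpow_le_two_rpow_mul hs0 hs1 hA.le hB.le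
    rw [← rpow_pow_comm (by positivity)]
    linear_combination h + 2 * hc

end Real

section InnerProductSpace

variable {E : Type*} [NormedAddCommGroup E] [InnerProductSpace ℝ E] {s : ℝ}

theorem norm_rpow_smul_self {x : E} (hx : x ≠ 0) : ‖‖x‖ ^ (s - 1) • x‖ = ‖x‖ ^ s := by
  have hx' : ‖x‖ ≠ 0 := norm_ne_zero_iff.2 hx
  rw [norm_smul, norm_of_nonneg (by positivity), rpow_sub_one hx', div_mul_cancel₀ _ hx']

theorem norm_rpow_smul_sub_rpow_smul_le_of_ne_zero (hs0 : 0 ≤ s) (hs1 : s ≤ 1) {a b : E}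
    (ha : a ≠ 0) (hb : b ≠ 0) :
    ‖‖a‖ ^ (s - 1) • a - ‖b‖ ^ (s - 1) • b‖ ≤ 2 ^ (1 - s) * ‖a - b‖ ^ s := by
  have hinner : 2 * inner ℝ a b = ‖a‖ ^ 2 + ‖b‖ ^ 2 - ‖a - b‖ ^ 2 := by
    rw [norm_sub_sq_real]; ring
  have hu : ‖a - b‖ ^ 2 ∈ Icc ((‖a‖ - ‖b‖) ^ 2) ((‖a‖ + ‖b‖) ^ 2) :=
    ⟨sq_le_sq.2 (by rw [abs_norm]; exact abs_norm_sub_norm_le a b),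
      pow_le_pow_left₀ (norm_nonneg _) (norm_sub_le a b) 2⟩
  refine (pow_le_pow_iff_left₀ (norm_nonneg _) (by positivity) two_ne_zero).1 ?_
  calc ‖‖a‖ ^ (s - 1) • a - ‖b‖ ^ (s - 1) • b‖ ^ 2
      = (‖a‖ ^ s) ^ 2 + (‖b‖ ^ s) ^ 2 -
          ‖a‖ ^ (s - 1) * ‖b‖ ^ (s - 1) * (‖a‖ ^ 2 + ‖b‖ ^ 2 - ‖a - b‖ ^ 2) := by
        rw [norm_sub_sq_real, norm_rpow_smul_self ha, norm_rpow_smul_self hb,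
          real_inner_smul_left, real_inner_smul_right, ← hinner]
        ring
    _ ≤ (2 ^ (1 - s)) ^ 2 * (‖a - b‖ ^ 2) ^ s :=
        rpow_sq_add_rpow_sq_sub_le hs0 hs1 (norm_pos_iff.2 ha) (norm_pos_iff.2 hb) hu
    _ = (2 ^ (1 - s) * ‖a - b‖ ^ s) ^ 2 := by rw [mul_pow, rpow_pow_comm (norm_nonneg _)]

theorem norm_rpow_smul_sub_rpow_smul_le (hs0 : 0 ≤ s) (hs1 : s ≤ 1) (a b : E) :
    ‖‖a‖ ^ (s - 1) • a - ‖b‖ ^ (s - 1) • b‖ ≤ 2 ^ (1 - s) * ‖a - b‖ ^ s := by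
  have hK : 1 ≤ (2 : ℝ) ^ (1 - s) := one_le_rpow one_le_two (by linarith)
  have hone_zero (x : E) : ‖‖x‖ ^ (s - 1) • x‖ ≤ 2 ^ (1 - s) * ‖x‖ ^ s := by
    rcases eq_or_ne x 0 with rfl | hx
    · simp only [smul_zero, norm_zero]
      positivity
    · rw [norm_rpow_smul_self hx]
      exact le_mul_of_one_le_left (by positivity) hK
  rcases eq_or_ne a 0 with rfl | ha
  · simpa using hone_zero b
  rcases eq_or_ne b 0 with rfl | hb
  · simpa using hone_zero a
  exact norm_rpow_smul_sub_rpow_smul_le_of_ne_zero hs0 hs1 ha hb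

end InnerProductSpace

theorem stmt9_general (p : ℝ) (hp1 : 1 < p) (hp2 : p < 2) (N : ℕ)
    (a b : EuclideanSpace ℝ (Fin N)) :
    ‖(if a = 0 then 0 else ‖a‖ ^ (p - 2) • a) -
        (if b = 0 then 0 else ‖b‖ ^ (p - 2) • b)‖ ≤
      (2:ℝ) ^ (2 - p) * ‖a - b‖ ^ (p - 1) := by
  have hfield (x : EuclideanSpace ℝ (Fin N)) :
      (if x = 0 then 0 else ‖x‖ ^ (p - 2) • x) = ‖x‖ ^ (p - 2) • x := by
    split_ifs with hx <;> simp [hx]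
  have h := norm_rpow_smul_sub_rpow_smul_le (s := p - 1) (by linarith) (by linarith) a b
  rw [show p - 1 - 1 = p - 2 by ring, show 1 - (p - 1) = 2 - p by ring] at h
  rwa [hfield, hfield]

theorem stmt9 (p : ℝ) (hp1 : 1 < p) (hp2 : p < 2) (N : ℕ) (hN : 1 ≤ N)
    (a b : EuclideanSpace ℝ (Fin N)) :
    ‖(if a = 0 then 0 else ‖a‖ ^ (p - 2) • a) -
        (if b = 0 then 0 else ‖b‖ ^ (p - 2) • b)‖ ≤
      (2:ℝ) ^ (2 - p) * ‖a - b‖ ^ (p - 1) :=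
  stmt9_general p hp1 hp2 N a b
end

section
/- Let 1 ≤ p ≤ q, let K ≥ 0 be a Lipschitz constant, and let a : B × I → [0,∞) be K-Lipschitz in the spatial variable. Fix (x,t) and δ > 0 with B_δ(x) ⊂ B, and let x* ∈ closure(B_δ(x)) attain the infimum of y ↦ a(y,t) over B_δ(x). Suppose v ∈ ℝᴺ satisfies |v| ≤ M/δ for some M > 0 and v ≠ 0. Then |v|^p + a(x,t)|v|^q ≤ (1 + K·M^{q−p}·δ^{1−(q−p)})·(|v|^p + a(x*,t)|v|^q). In particular, if q ≤ p + 1 then the factor is bounded by 1 + K·M^{q−p}, independently of δ. -/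
/-!
Split `a(x,t) = a(x*,t) + (a(x,t) - a(x*,t))`. The Lipschitz bound gives
`a(x,t) - a(x*,t) ≤ K δ`, and `|v| ≤ M / δ` gives `|v|^q ≤ (M/δ)^(q-p) |v|^p`, so the excess
`(a(x,t) - a(x*,t)) |v|^q` is at most `K δ (M/δ)^(q-p) |v|^p = K M^(q-p) δ^(1-(q-p)) |v|^p`.
When `q - p ≤ 1` and `δ ≤ 1`, the power `δ^(1-(q-p))` is at most `1`.
-/

open Real

lemma rpow_le_rpow_mul_rpow_sub {s R p q : ℝ} (hs : 0 < s) (hsR : s ≤ R) (hpq : p ≤ q) :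
    s ^ q ≤ s ^ p * R ^ (q - p) := by
  calc s ^ q = s ^ p * s ^ (q - p) := by rw [← rpow_add hs, add_sub_cancel]
    _ ≤ s ^ p * R ^ (q - p) := by gcongr

lemma mul_div_rpow_eq_rpow_mul_rpow_one_sub {M δ : ℝ} (r : ℝ) (hM : 0 ≤ M) (hδ : 0 < δ) :
    δ * (M / δ) ^ r = M ^ r * δ ^ (1 - r) := by
  rw [div_rpow hM hδ.le, rpow_sub hδ, rpow_one]
  field_simp

lemma rpow_add_mul_rpow_le_one_add_mul {s R p q a b L : ℝ} (hs : 0 < s) (hsR : s ≤ R)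
    (hpq : p ≤ q) (hb : 0 ≤ b) (hL : 0 ≤ L) (hab : a ≤ b + L) :
    s ^ p + a * s ^ q ≤ (1 + L * R ^ (q - p)) * (s ^ p + b * s ^ q) := by
  have hsq : 0 ≤ s ^ q := rpow_nonneg hs.le q
  have hR : 0 ≤ R ^ (q - p) := rpow_nonneg (hs.le.trans hsR) _
  have hexcess : (a - b) * s ^ q ≤ L * R ^ (q - p) * s ^ p :=
    calc (a - b) * s ^ q ≤ L * s ^ q := by gcongr; linarith
      _ ≤ L * (s ^ p * R ^ (q - p)) := by gcongr; exact rpow_le_rpow_mul_rpow_sub hs hsR hpq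
      _ = L * R ^ (q - p) * s ^ p := by ring
  have hcross : 0 ≤ L * R ^ (q - p) * (b * s ^ q) := by positivity
  linarith

theorem stmt13_general (N : ℕ) (p q K M δ t : ℝ) (hpq : p ≤ q)
    (hK : 0 ≤ K) (hM : 0 < M) (hδ : 0 < δ)
    (B : Set (EuclideanSpace ℝ (Fin N))) (a : EuclideanSpace ℝ (Fin N) → ℝ → ℝ)
    (ha0 : ∀ y ∈ B, 0 ≤ a y t)
    (hLip : ∀ y ∈ B, ∀ y' ∈ B, |a y t - a y' t| ≤ K * ‖y - y'‖)
    (x xs : EuclideanSpace ℝ (Fin N))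
    (hball : Metric.closedBall x δ ⊆ B)
    (hxs : xs ∈ closure (Metric.ball x δ))
    (v : EuclideanSpace ℝ (Fin N)) (hv : ‖v‖ ≤ M / δ) (hv0 : v ≠ 0) :
    ‖v‖ ^ p + a x t * ‖v‖ ^ q ≤
      (1 + K * M ^ (q - p) * δ ^ (1 - (q - p))) * (‖v‖ ^ p + a xs t * ‖v‖ ^ q) ∧
    (q ≤ p + 1 → δ ≤ 1 →
      ‖v‖ ^ p + a x t * ‖v‖ ^ q ≤
        (1 + K * M ^ (q - p)) * (‖v‖ ^ p + a xs t * ‖v‖ ^ q)) := by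
  have hxs' : xs ∈ Metric.closedBall x δ := Metric.closure_ball_subset_closedBall hxs
  have hxsB : xs ∈ B := hball hxs'
  have hjump : a x t ≤ a xs t + K * δ := by
    have hdist : ‖x - xs‖ ≤ δ := by rw [← dist_eq_norm, dist_comm]; exact hxs'
    have hlip := hLip x (hball (Metric.mem_closedBall_self hδ.le)) xs hxsB
    nlinarith [le_abs_self (a x t - a xs t)]
  have hbound := rpow_add_mul_rpow_le_one_add_mul (norm_pos_iff.mpr hv0) hv hpq (ha0 xs hxsB)
    (by positivity) hjump
  rw [mul_assoc K, mul_div_rpow_eq_rpow_mul_rpow_one_sub _ hM.le hδ, ← mul_assoc] at hbound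
  refine ⟨hbound, fun hqp hδ1 => hbound.trans ?_⟩
  have hδpow : δ ^ (1 - (q - p)) ≤ 1 := rpow_le_one hδ.le hδ1 (by linarith)
  have hxs0 := ha0 xs hxsB
  gcongr (1 + ?_) * _
  exact mul_le_of_le_one_right (by positivity) hδpow

theorem stmt13 (N : ℕ) (p q K M δ t : ℝ) (hp : 1 ≤ p) (hpq : p ≤ q)
    (hK : 0 ≤ K) (hM : 0 < M) (hδ : 0 < δ)
    (B : Set (EuclideanSpace ℝ (Fin N))) (a : EuclideanSpace ℝ (Fin N) → ℝ → ℝ)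
    (ha0 : ∀ y ∈ B, 0 ≤ a y t)
    (hLip : ∀ y ∈ B, ∀ y' ∈ B, |a y t - a y' t| ≤ K * ‖y - y'‖)
    (x xs : EuclideanSpace ℝ (Fin N))
    (hball : Metric.closedBall x δ ⊆ B)
    (hxs : xs ∈ closure (Metric.ball x δ))
    (hinf : ∀ y ∈ Metric.ball x δ, a xs t ≤ a y t)
    (v : EuclideanSpace ℝ (Fin N)) (hv : ‖v‖ ≤ M / δ) (hv0 : v ≠ 0) :
    ‖v‖ ^ p + a x t * ‖v‖ ^ q ≤
      (1 + K * M ^ (q - p) * δ ^ (1 - (q - p))) * (‖v‖ ^ p + a xs t * ‖v‖ ^ q) ∧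
    (q ≤ p + 1 → δ ≤ 1 →
      ‖v‖ ^ p + a x t * ‖v‖ ^ q ≤
        (1 + K * M ^ (q - p)) * (‖v‖ ^ p + a xs t * ‖v‖ ^ q)) :=
  stmt13_general N p q K M δ t hpq hK hM hδ B a ha0 hLip x xs hball hxs v hv hv0
end

section
/- Let N ≥ 1 and let X, Y, B ∈ S(N) be symmetric N×N real matrices and μ > 0 such that the 2N×2N block matrix inequality [[X, 0],[0, −Y]] ≤ [[B, −B],[−B, B]] + (2/μ)·[[B², −B²],[−B², B²]] holds in the sense of quadratic forms. Then for all b, c ≥ 0 and all unit vectors ξ ∈ ℝᴺ, ξᵀ(bX − cY)ξ ≤ (√b − √c)²·(‖B‖ + (2/μ)‖B‖²). -/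
/-!
Testing the block inequality with the pair `(√b ξ, √c ξ)` turns its left side into
`ξᵀ(bX − cY)ξ`, while the right side only sees the difference `(√b − √c) ξ`, giving the factor
`(√b − √c)²` in front of `ξᵀBξ + (2/μ) ξᵀB²ξ`. Both quadratic forms are bounded through the
operator norm, using `‖B²‖ ≤ ‖B‖²`.
-/

open Matrix

namespace Matrix

variable {n : Type*} [Fintype n]

theorem smul_dotProduct_mulVec_smul {R : Type*} [CommSemiring R] (A : Matrix n n R) (t : R)
    (x : n → R) : (t • x) ⬝ᵥ A *ᵥ (t • x) = t ^ 2 * (x ⬝ᵥ A *ᵥ x) := by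
  rw [mulVec_smul, smul_dotProduct, dotProduct_smul, smul_eq_mul, smul_eq_mul]
  ring

variable [DecidableEq n]

theorem dotProduct_mulVec_le_norm_toEuclideanCLM (A : Matrix n n ℝ) (x : EuclideanSpace ℝ n) :
    x.ofLp ⬝ᵥ A *ᵥ x.ofLp ≤ ‖toEuclideanCLM (𝕜 := ℝ) A‖ * ‖x‖ ^ 2 := by
  rw [← inner_toEuclideanCLM]
  calc inner ℝ x (toEuclideanCLM (𝕜 := ℝ) A x)
      ≤ ‖x‖ * ‖toEuclideanCLM (𝕜 := ℝ) A x‖ := real_inner_le_norm _ _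
    _ ≤ ‖x‖ * (‖toEuclideanCLM (𝕜 := ℝ) A‖ * ‖x‖) := by gcongr; exact ContinuousLinearMap.le_opNorm _ _
    _ = ‖toEuclideanCLM (𝕜 := ℝ) A‖ * ‖x‖ ^ 2 := by ring

theorem dotProduct_mul_self_mulVec_le_norm_toEuclideanCLM_sq (A : Matrix n n ℝ)
    (x : EuclideanSpace ℝ n) :
    x.ofLp ⬝ᵥ (A * A) *ᵥ x.ofLp ≤ ‖toEuclideanCLM (𝕜 := ℝ) A‖ ^ 2 * ‖x‖ ^ 2 := by
  refine (dotProduct_mulVec_le_norm_toEuclideanCLM _ x).trans ?_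
  rw [map_mul]
  gcongr
  exact (norm_mul_le _ _).trans_eq (sq _).symm

end Matrix

theorem stmt16_general (N : ℕ) (X Y B : Matrix (Fin N) (Fin N) ℝ)
    (μ : ℝ) (hμ : 0 < μ)
    (hblock : ∀ ξ₁ ξ₂ : Fin N → ℝ,
      dotProduct ξ₁ (X.mulVec ξ₁) - dotProduct ξ₂ (Y.mulVec ξ₂) ≤
        dotProduct (ξ₁ - ξ₂) (B.mulVec (ξ₁ - ξ₂)) +
          (2 / μ) * dotProduct (ξ₁ - ξ₂) ((B * B).mulVec (ξ₁ - ξ₂))) :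
    ∀ b c : ℝ, 0 ≤ b → 0 ≤ c → ∀ ξ : EuclideanSpace ℝ (Fin N), ‖ξ‖ = 1 →
      dotProduct (ξ : Fin N → ℝ) ((b • X - c • Y).mulVec ξ) ≤
        (Real.sqrt b - Real.sqrt c) ^ 2 *
          (‖Matrix.toEuclideanCLM (𝕜 := ℝ) B‖ +
            (2 / μ) * ‖Matrix.toEuclideanCLM (𝕜 := ℝ) B‖ ^ 2) := by
  intro b c hb hc ξ hξ
  have htest := hblock (Real.sqrt b • ξ.ofLp) (Real.sqrt c • ξ.ofLp)
  rw [← sub_smul] at htest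
  simp only [smul_dotProduct_mulVec_smul, Real.sq_sqrt hb, Real.sq_sqrt hc] at htest
  have hB := dotProduct_mulVec_le_norm_toEuclideanCLM B ξ
  have hB2 := dotProduct_mul_self_mulVec_le_norm_toEuclideanCLM_sq B ξ
  rw [hξ, one_pow, mul_one] at hB hB2
  calc ξ.ofLp ⬝ᵥ (b • X - c • Y) *ᵥ ξ.ofLp
      = b * (ξ.ofLp ⬝ᵥ X *ᵥ ξ.ofLp) - c * (ξ.ofLp ⬝ᵥ Y *ᵥ ξ.ofLp) := by
        rw [sub_mulVec, dotProduct_sub, smul_mulVec, smul_mulVec, dotProduct_smul,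
          dotProduct_smul, smul_eq_mul, smul_eq_mul]
    _ ≤ (Real.sqrt b - Real.sqrt c) ^ 2 *
          (ξ.ofLp ⬝ᵥ B *ᵥ ξ.ofLp + 2 / μ * (ξ.ofLp ⬝ᵥ (B * B) *ᵥ ξ.ofLp)) := by
        linarith
    _ ≤ _ := by gcongr

theorem stmt16 (N : ℕ) (hN : 1 ≤ N) (X Y B : Matrix (Fin N) (Fin N) ℝ)
    (hX : X.IsSymm) (hY : Y.IsSymm) (hB : B.IsSymm) (μ : ℝ) (hμ : 0 < μ)
    (hblock : ∀ ξ₁ ξ₂ : Fin N → ℝ,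
      dotProduct ξ₁ (X.mulVec ξ₁) - dotProduct ξ₂ (Y.mulVec ξ₂) ≤
        dotProduct (ξ₁ - ξ₂) (B.mulVec (ξ₁ - ξ₂)) +
          (2 / μ) * dotProduct (ξ₁ - ξ₂) ((B * B).mulVec (ξ₁ - ξ₂))) :
    ∀ b c : ℝ, 0 ≤ b → 0 ≤ c → ∀ ξ : EuclideanSpace ℝ (Fin N), ‖ξ‖ = 1 →
      dotProduct (ξ : Fin N → ℝ) ((b • X - c • Y).mulVec ξ) ≤
        (Real.sqrt b - Real.sqrt c) ^ 2 *
          (‖Matrix.toEuclideanCLM (𝕜 := ℝ) B‖ +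
            (2 / μ) * ‖Matrix.toEuclideanCLM (𝕜 := ℝ) B‖ ^ 2) :=
  stmt16_general N X Y B μ hμ hblock
end
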